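/- Let f > 1 be an odd integer, let e = ⌊log₂ f⌋ (so 2^e < f < 2^{e+1}), let m be the multiplicative order of 2 modulo f, and write 2^m − 1 = f·q. Then for every integer j ≥ 1, ⌊2^{jm+e}/f⌋ = q·2^e·(2^{jm} − 1)/(2^m − 1), and 2^{m−1} ≤ q·2^e < 2^m; consequently ⌊2^{jm+e}/f⌋ is a binary j'th power (its binary representation consists of j repetitions of a block of length m). -/

import Mathlib

/-- `ck j n = 1 + 2^n + 2^(2n) + ⋯ + 2^((j-1)n)`. -/
def ck (j n : ℕ) : ℕ := ∑ i ∈ Finset.range j, 2 ^ (i * n)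

/-- `m` is a binary `j`'th power: `m = a * ck j n` for some `n ≥ 1` and `2^(n-1) ≤ a < 2^n`. -/
def IsBinaryKthPower (j m : ℕ) : Prop :=
  ∃ n a : ℕ, 1 ≤ n ∧ 2 ^ (n - 1) ≤ a ∧ a < 2 ^ n ∧ m = a * ck j n

/-!
Since `f·q = 2^m - 1`, the geometric series `ck j m` gives `2^(jm) = f·q·ck j m + 1`.
Multiplying by `2^e < f` shows that `⌊2^(jm+e)/f⌋ = q·2^e·ck j m`, i.e. `j` copies of the block
`q·2^e`, and `2^e < f < 2^(e+1)` makes that block exactly `m` binary digits long.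
-/

theorem two_pow_sub_one_mul_ck_add_one (j n : ℕ) : (2 ^ n - 1) * ck j n + 1 = 2 ^ (j * n) := by
  have h := geom_sum_mul_add (2 ^ n - 1) j
  rw [Nat.sub_add_cancel Nat.one_le_two_pow] at h
  simpa only [ck, mul_comm _ n, pow_mul, mul_comm (2 ^ n - 1)] using h

theorem ck_eq_div {n : ℕ} (hn : 0 < n) (j : ℕ) : ck j n = (2 ^ (j * n) - 1) / (2 ^ n - 1) := by
  have hpos : 0 < 2 ^ n - 1 := Nat.sub_pos_of_lt (Nat.one_lt_two_pow hn.ne')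
  rw [← two_pow_sub_one_mul_ck_add_one j n, Nat.add_sub_cancel, Nat.mul_div_cancel_left _ hpos]

theorem two_pow_mul_div_eq {f m q r : ℕ} (hq : 2 ^ m - 1 = f * q) (hr : r < f) (j : ℕ) :
    2 ^ (j * m) * r / f = q * r * ck j m := by
  have hexp : 2 ^ (j * m) * r = f * (q * r * ck j m) + r := by
    rw [← two_pow_sub_one_mul_ck_add_one j m, hq]
    ring
  rw [hexp, Nat.mul_add_div (by omega), Nat.div_eq_of_lt hr, add_zero]

theorem mul_lt_two_pow {f m q r : ℕ} (hq : 2 ^ m - 1 = f * q) (hr : r < f) : q * r < 2 ^ m :=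
  calc q * r ≤ f * q := by rw [mul_comm]; exact Nat.mul_le_mul_right q hr.le
    _ < 2 ^ m := by rw [← hq]; exact Nat.sub_lt (Nat.two_pow_pos m) one_pos

theorem two_pow_pred_le_mul {f m q r : ℕ} (hm : 0 < m) (hq : 2 ^ m - 1 = f * q)
    (hf : f < 2 * r) : 2 ^ (m - 1) ≤ q * r := by
  have hq0 : q ≠ 0 := by
    rintro rfl
    have := Nat.one_lt_two_pow hm.ne'
    omega
  have h2m : 2 ^ m = 2 * 2 ^ (m - 1) := by rw [← pow_succ', Nat.sub_add_cancel hm]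
  have : 2 ^ m ≤ 2 * r * q :=
    calc 2 ^ m = f * q + 1 := by have := Nat.one_le_two_pow (n := m); omega
      _ ≤ (f + 1) * q := by rw [add_mul, one_mul]; omega
      _ ≤ 2 * r * q := Nat.mul_le_mul_right q hf
  rw [h2m, mul_assoc, mul_comm r] at this
  omega

theorem orderOf_two_pos_of_odd {f : ℕ} (hodd : Odd f) : 0 < orderOf (2 : ZMod f) := by
  have : NeZero f := ⟨hodd.pos.ne'⟩
  have hunit : IsUnit ((2 : ℕ) : ZMod f) :=
    (ZMod.isUnit_iff_coprime 2 f).mpr (Nat.coprime_two_left.mpr hodd)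
  exact orderOf_pos_iff.mpr (by exact_mod_cast hunit.isOfFinOrder)

theorem pow_log_two_lt_of_odd {f : ℕ} (hf : 1 < f) (hodd : Odd f) : 2 ^ Nat.log 2 f < f := by
  refine lt_of_le_of_ne (Nat.pow_log_le_self 2 (by omega)) fun h => ?_
  have hlog : Nat.log 2 f ≠ 0 := (Nat.log_pos one_lt_two hf).ne'
  exact Nat.not_even_iff_odd.mpr hodd (h ▸ (Nat.even_pow.mpr ⟨even_two, hlog⟩))

theorem floor_pow_div_isBinaryKthPower_general (f : ℕ) (hf : 1 < f) (hodd : Odd f)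
    (e m q : ℕ) (he : e = Nat.log 2 f) (hm : m = orderOf (2 : ZMod f))
    (hq : 2 ^ m - 1 = f * q) (j : ℕ) :
    2 ^ (j * m + e) / f = q * 2 ^ e * ((2 ^ (j * m) - 1) / (2 ^ m - 1)) ∧
      2 ^ (m - 1) ≤ q * 2 ^ e ∧ q * 2 ^ e < 2 ^ m ∧
      IsBinaryKthPower j (2 ^ (j * m + e) / f) := by
  have hm0 : 0 < m := hm ▸ orderOf_two_pos_of_odd hodd
  have hef : 2 ^ e < f := he ▸ pow_log_two_lt_of_odd hf hodd
  have hfe : f < 2 * 2 ^ e := by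
    rw [← pow_succ', he]; exact Nat.lt_pow_succ_log_self one_lt_two f
  have hfloor : 2 ^ (j * m + e) / f = q * 2 ^ e * ck j m := by
    rw [pow_add, two_pow_mul_div_eq hq hef]
  have hlow := two_pow_pred_le_mul hm0 hq hfe
  have hhigh := mul_lt_two_pow hq hef
  exact ⟨by rw [hfloor, ck_eq_div hm0], hlow, hhigh, m, q * 2 ^ e, hm0, hlow, hhigh, hfloor⟩

/-- Let `f > 1` be odd, `e = ⌊log₂ f⌋`, `m` the multiplicative order of `2` mod `f`, and
`2^m - 1 = f·q`. Then for `j ≥ 1`, `⌊2^(jm+e)/f⌋ = q·2^e·(2^(jm) - 1)/(2^m - 1)` with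
`2^(m-1) ≤ q·2^e < 2^m`; consequently `⌊2^(jm+e)/f⌋` is a binary `j`'th power. -/
theorem floor_pow_div_isBinaryKthPower (f : ℕ) (hf : 1 < f) (hodd : Odd f)
    (e m q : ℕ) (he : e = Nat.log 2 f) (hm : m = orderOf (2 : ZMod f))
    (hq : 2 ^ m - 1 = f * q) (j : ℕ) (hj : 1 ≤ j) :
    2 ^ (j * m + e) / f = q * 2 ^ e * ((2 ^ (j * m) - 1) / (2 ^ m - 1)) ∧
      2 ^ (m - 1) ≤ q * 2 ^ e ∧ q * 2 ^ e < 2 ^ m ∧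
      IsBinaryKthPower j (2 ^ (j * m + e) / f) :=
  floor_pow_div_isBinaryKthPower_general f hf hodd e m q he hm hq j
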